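/- Lower bound for isotopies between concentric circles: every C^1 isotopy Γ : S^1 × [0,1] → ℝ³ with Γ(s,0) = (cos s, sin s, 0) and Γ(s,1) = R(cos s, sin s, 0), R ≥ 1, satisfies A(Γ) ≥ π(R² − 1). -/

import Mathlib

open Real MeasureTheory

noncomputable def cross3 (u v : Fin 3 → ℝ) : EuclideanSpace ℝ (Fin 3) :=
  WithLp.toLp 2 ![u 1 * v 2 - u 2 * v 1, u 2 * v 0 - u 0 * v 2, u 0 * v 1 - u 1 * v 0]

noncomputable def partialS (Γ : ℝ → ℝ → EuclideanSpace ℝ (Fin 3)) (s t : ℝ) :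
    EuclideanSpace ℝ (Fin 3) :=
  deriv (fun x => Γ x t) s

noncomputable def partialT (Γ : ℝ → ℝ → EuclideanSpace ℝ (Fin 3)) (s t : ℝ) :
    EuclideanSpace ℝ (Fin 3) :=
  deriv (fun y => Γ s y) t

/-- Swept area of an isotopy, with circle variable `s ∈ [0, 2π]` and time `t ∈ [0,1]`. -/
noncomputable def sweptArea (Γ : ℝ → ℝ → EuclideanSpace ℝ (Fin 3)) : ℝ :=
  ∫ t in (0:ℝ)..1, ∫ s in (0:ℝ)..(2 * π),
    ‖cross3 (partialS Γ s t) (partialT Γ s t)‖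

/-!
Minus the `z`-component of `∂ₛΓ × ∂ₜΓ` bounds its norm from below, and it calibrates: its
integral over the isotopy is the change `𝒜(γ₁) - 𝒜(γ₀) = πR² - π` of the projected signed area
`𝒜(γ) = ∫ x dy`. As `Γ` is only `C¹`, `∂ₜ𝒜` cannot be computed by differentiating under the
integral; instead, after an integration by parts in `s` (the boundary term vanishes by
periodicity), the increment `𝒜(t') - 𝒜(t)` is written as the integral over `[t, t']` of a
function jointly continuous in both times, and that suffices for differentiability.
-/

open Function Asymptotics

theorem hasDerivAt_of_sub_eq_integral {E : Type*} [NormedAddCommGroup E] [NormedSpace ℝ E]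
    [CompleteSpace E] {f : ℝ → E} {G : ℝ → ℝ → E} {t : ℝ} (hG : Continuous (uncurry G))
    (hf : ∀ t', f t' - f t = ∫ τ in t..t', G τ t') : HasDerivAt f (G t t) t := by
  rw [hasDerivAt_iff_isLittleO, isLittleO_iff]
  intro ε hε
  obtain ⟨δ, hδ, hGδ⟩ := Metric.continuousAt_iff.1 (hG.continuousAt (x := (t, t))) ε hε
  filter_upwards [Metric.ball_mem_nhds t hδ] with t' ht'
  have hGt' : Continuous fun τ => G τ t' := by fun_prop
  rw [hf, ← intervalIntegral.integral_const,
    ← intervalIntegral.integral_sub (hGt'.intervalIntegrable _ _) intervalIntegrable_const,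
    Real.norm_eq_abs]
  refine intervalIntegral.norm_integral_le_of_norm_le_const fun τ hτ => ?_
  have hτt : |τ - t| ≤ |t' - t| := Set.abs_sub_left_of_mem_uIcc (Set.uIoc_subset_uIcc hτ)
  rw [Metric.mem_ball, Real.dist_eq] at ht'
  rw [← dist_eq_norm]
  refine (hGδ (x := (τ, t')) ?_).le
  rw [Prod.dist_eq, max_lt_iff, Real.dist_eq, Real.dist_eq]
  exact ⟨hτt.trans_lt ht', ht'⟩

theorem HasDerivAt.euclidean_apply {ι : Type*} [Fintype ι] {f : ℝ → EuclideanSpace ℝ ι}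
    {f' : EuclideanSpace ℝ ι} {x : ℝ} (hf : HasDerivAt f f' x) (i : ι) :
    HasDerivAt (fun y => f y i) (f' i) x :=
  (PiLp.hasFDerivAt_apply (𝕜 := ℝ) 2 (f x) i).comp_hasDerivAt x hf

section PartialDerivatives

variable {E : Type*} [NormedAddCommGroup E] [NormedSpace ℝ E] {f : ℝ → ℝ → E}

theorem Differentiable.hasDerivAt_uncurry_left (hf : Differentiable ℝ (uncurry f)) (s t : ℝ) :
    HasDerivAt (f · t) (fderiv ℝ (uncurry f) (s, t) (1, 0)) s :=
  (hf (s, t)).hasFDerivAt.comp_hasDerivAt (f := fun s => (s, t)) s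
    ((hasDerivAt_id s).prodMk (hasDerivAt_const s t))

theorem Differentiable.hasDerivAt_uncurry_right (hf : Differentiable ℝ (uncurry f)) (s t : ℝ) :
    HasDerivAt (f s ·) (fderiv ℝ (uncurry f) (s, t) (0, 1)) t :=
  (hf (s, t)).hasFDerivAt.comp_hasDerivAt (f := fun t => (s, t)) t
    ((hasDerivAt_const t s).prodMk (hasDerivAt_id t))

theorem ContDiff.continuous_deriv_uncurry_left (hf : ContDiff ℝ 1 (uncurry f)) :
    Continuous (uncurry fun s t => deriv (f · t) s) := by
  have hderiv : (uncurry fun s t => deriv (f · t) s) = fun p => fderiv ℝ (uncurry f) p (1, 0) :=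
    funext fun p => ((hf.differentiable one_ne_zero).hasDerivAt_uncurry_left p.1 p.2).deriv
  rw [hderiv]
  exact (hf.continuous_fderiv one_ne_zero).clm_apply continuous_const

theorem ContDiff.continuous_deriv_uncurry_right (hf : ContDiff ℝ 1 (uncurry f)) :
    Continuous (uncurry fun s t => deriv (f s ·) t) := by
  have hderiv : (uncurry fun s t => deriv (f s ·) t) = fun p => fderiv ℝ (uncurry f) p (0, 1) :=
    funext fun p => ((hf.differentiable one_ne_zero).hasDerivAt_uncurry_right p.1 p.2).deriv
  rw [hderiv]
  exact (hf.continuous_fderiv one_ne_zero).clm_apply continuous_const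

end PartialDerivatives

section PlanarStokes

variable {x y x₁ x₂ y₁ y₂ : ℝ → ℝ → ℝ} {a b : ℝ}
  (hx₁ : ∀ s t, HasDerivAt (x · t) (x₁ s t) s) (hx₂ : ∀ s t, HasDerivAt (x s ·) (x₂ s t) t)
  (hy₁ : ∀ s t, HasDerivAt (y · t) (y₁ s t) s) (hy₂ : ∀ s t, HasDerivAt (y s ·) (y₂ s t) t)
  (hx₁c : Continuous (uncurry x₁)) (hx₂c : Continuous (uncurry x₂))
  (hy₁c : Continuous (uncurry y₁)) (hy₂c : Continuous (uncurry y₂))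
  (hxab : ∀ t, x b t = x a t) (hyab : ∀ t, y b t = y a t)
include hx₁ hx₂ hy₁ hy₂ hx₁c hx₂c hy₁c hy₂c hxab hyab

theorem sub_integral_mul_eq_integral_integral (t t' : ℝ) :
    (∫ s in a..b, x s t' * y₁ s t') - ∫ s in a..b, x s t * y₁ s t =
      ∫ τ in t..t', ∫ s in a..b, (x₂ s τ * y₁ s t' - x₁ s t * y₂ s τ) := by
  have hxc : ∀ t, Continuous (x · t) :=
    fun t => continuous_iff_continuousAt.2 fun s => (hx₁ s t).continuousAt
  have hyc : ∀ t, Continuous (y · t) :=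
    fun t => continuous_iff_continuousAt.2 fun s => (hy₁ s t).continuousAt
  have ibp : ∀ u v, ∫ s in a..b, x s u * y₁ s v = -∫ s in a..b, x₁ s u * y s v := fun u v => by
    rw [intervalIntegral.integral_mul_deriv_eq_deriv_mul (fun s _ => hx₁ s u) (fun s _ => hy₁ s v)
      ((by fun_prop : Continuous (x₁ · u)).intervalIntegrable _ _)
      ((by fun_prop : Continuous (y₁ · v)).intervalIntegrable _ _), hxab, hyab, sub_self, zero_sub]
  have ftc : ∀ {g g₂ : ℝ → ℝ → ℝ}, (∀ s t, HasDerivAt (g s ·) (g₂ s t) t) →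
      Continuous (uncurry g₂) → ∀ s, ∫ τ in t..t', g₂ s τ = g s t' - g s t :=
    fun {_ g₂} hg hg₂ s => intervalIntegral.integral_eq_sub_of_hasDerivAt (fun τ _ => hg s τ)
      ((by fun_prop : Continuous (g₂ s ·)).intervalIntegrable _ _)
  have inner : ∀ s, ∫ τ in t..t', (x₂ s τ * y₁ s t' - x₁ s t * y₂ s τ) =
      (x s t' - x s t) * y₁ s t' - x₁ s t * (y s t' - y s t) := fun s => by
    rw [intervalIntegral.integral_sub, intervalIntegral.integral_mul_const,
      intervalIntegral.integral_const_mul, ftc hx₂ hx₂c, ftc hy₂ hy₂c]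
    all_goals exact Continuous.intervalIntegrable (by fun_prop) _ _
  rw [← intervalIntegral_intervalIntegral_swap, intervalIntegral.integral_congr fun s _ => inner s]
  · simp only [sub_mul, mul_sub]
    rw [intervalIntegral.integral_sub, intervalIntegral.integral_sub,
      intervalIntegral.integral_sub, ibp t t', ibp t t]
    · ring
    all_goals exact Continuous.intervalIntegrable (by fun_prop) _ _
  · exact ((by fun_prop : Continuous _).continuousOn.integrableOn_compact
      (isCompact_uIcc.prod isCompact_uIcc)).mono_set
      (Set.prod_mono Set.uIoc_subset_uIcc Set.uIoc_subset_uIcc)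

theorem integral_integral_eq_sub_integral_mul (t₀ t₁ : ℝ) :
    ∫ t in t₀..t₁, ∫ s in a..b, (x₂ s t * y₁ s t - x₁ s t * y₂ s t) =
      (∫ s in a..b, x s t₁ * y₁ s t₁) - ∫ s in a..b, x s t₀ * y₁ s t₀ := by
  have hderiv : ∀ t, HasDerivAt (fun t => ∫ s in a..b, x s t * y₁ s t)
      (∫ s in a..b, (x₂ s t * y₁ s t - x₁ s t * y₂ s t)) t := fun t =>
    hasDerivAt_of_sub_eq_integral
      (G := fun τ t' => ∫ s in a..b, (x₂ s τ * y₁ s t' - x₁ s t * y₂ s τ))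
      (intervalIntegral.continuous_parametric_intervalIntegral_of_continuous' (by fun_prop) a b)
      (sub_integral_mul_eq_integral_integral hx₁ hx₂ hy₁ hy₂ hx₁c hx₂c hy₁c hy₂c hxab hyab t)
  exact intervalIntegral.integral_eq_sub_of_hasDerivAt (fun t _ => hderiv t)
    ((intervalIntegral.continuous_parametric_intervalIntegral_of_continuous' (by fun_prop) a b
      ).intervalIntegrable _ _)

end PlanarStokes

theorem continuous_cross3 : Continuous fun p : (Fin 3 → ℝ) × (Fin 3 → ℝ) => cross3 p.1 p.2 := by
  unfold cross3; fun_prop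

theorem sub_le_norm_cross3 (u v : Fin 3 → ℝ) : u 1 * v 0 - u 0 * v 1 ≤ ‖cross3 u v‖ :=
  calc u 1 * v 0 - u 0 * v 1 ≤ ‖cross3 u v 2‖ := by
        simpa [cross3, Real.norm_eq_abs, abs_sub_comm] using le_abs_self (u 1 * v 0 - u 0 * v 1)
    _ ≤ ‖cross3 u v‖ := PiLp.norm_apply_le _ _

theorem integral_mul_deriv_circle {u v v' : ℝ → ℝ} (r : ℝ) (hu : ∀ s, u s = r * cos s)
    (hv : ∀ s, v s = r * sin s) (hv' : ∀ s, HasDerivAt v (v' s) s) :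
    ∫ s in (0)..(2 * π), u s * v' s = π * r ^ 2 := by
  have hv'_eq : ∀ s, v' s = r * cos s := fun s =>
    (hv' s).unique (by simpa only [← funext hv] using (hasDerivAt_sin s).const_mul r)
  simp only [hu, hv'_eq, ← sq, mul_pow]
  rw [intervalIntegral.integral_const_mul, integral_cos_sq, sin_two_pi, sin_zero]
  ring

section Isotopy

variable {Γ : ℝ → ℝ → EuclideanSpace ℝ (Fin 3)} (hΓ : ContDiff ℝ 1 (uncurry Γ))
include hΓ

theorem hasDerivAt_partialS (s t : ℝ) (i : Fin 3) :
    HasDerivAt (Γ · t i) (partialS Γ s t i) s :=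
  ((hΓ.differentiable one_ne_zero).hasDerivAt_uncurry_left s t).differentiableAt.hasDerivAt
    |>.euclidean_apply i

theorem hasDerivAt_partialT (s t : ℝ) (i : Fin 3) :
    HasDerivAt (Γ s · i) (partialT Γ s t i) t :=
  ((hΓ.differentiable one_ne_zero).hasDerivAt_uncurry_right s t).differentiableAt.hasDerivAt
    |>.euclidean_apply i

theorem continuous_partialS : Continuous (uncurry (partialS Γ)) :=
  hΓ.continuous_deriv_uncurry_left

theorem continuous_partialT : Continuous (uncurry (partialT Γ)) :=
  hΓ.continuous_deriv_uncurry_right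

theorem integral_integral_le_sweptArea :
    ∫ t in (0)..1, ∫ s in (0)..(2 * π),
      (partialT Γ s t 0 * partialS Γ s t 1 - partialS Γ s t 0 * partialT Γ s t 1) ≤
      sweptArea Γ := by
  have hS := continuous_partialS hΓ
  have hT := continuous_partialT hΓ
  have hcross := continuous_cross3
  have hint {F : ℝ → ℝ → ℝ} (hF : Continuous (uncurry F)) :
      IntervalIntegrable (fun t => ∫ s in (0)..(2 * π), F t s) volume 0 1 :=
    (intervalIntegral.continuous_parametric_intervalIntegral_of_continuous' hF _ _
      ).intervalIntegrable _ _
  refine intervalIntegral.integral_mono_on zero_le_one (hint (by fun_prop)) (hint (by fun_prop))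
    fun t _ => ?_
  refine intervalIntegral.integral_mono_on (by positivity) ?_ ?_ fun s _ => ?_
  · exact Continuous.intervalIntegrable (by fun_prop) _ _
  · exact Continuous.intervalIntegrable (by fun_prop) _ _
  simpa only [mul_comm] using sub_le_norm_cross3 (partialS Γ s t) (partialT Γ s t)

end Isotopy

theorem sweptArea_lower_bound_circles_general (Γ : ℝ → ℝ → EuclideanSpace ℝ (Fin 3))
    (hΓ : ContDiff ℝ 1 (Function.uncurry Γ))
    (hper : ∀ s t, Γ (s + 2 * π) t = Γ s t)
    (R : ℝ)
    (h0 : ∀ s, Γ s 0 = (WithLp.toLp 2 ![Real.cos s, Real.sin s, 0] : EuclideanSpace ℝ (Fin 3)))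
    (h1 : ∀ s, Γ s 1 = (WithLp.toLp 2 ![R * Real.cos s, R * Real.sin s, 0] :
      EuclideanSpace ℝ (Fin 3))) :
    π * (R ^ 2 - 1) ≤ sweptArea Γ := by
  have hS := continuous_partialS hΓ
  have hT := continuous_partialT hΓ
  have hper' (i : Fin 3) (t : ℝ) : Γ (2 * π) t i = Γ 0 t i := by
    simpa using congrArg (· i) (hper 0 t)
  have stokes := integral_integral_eq_sub_integral_mul (a := 0) (b := 2 * π)
    (fun s t => hasDerivAt_partialS hΓ s t 0) (fun s t => hasDerivAt_partialT hΓ s t 0)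
    (fun s t => hasDerivAt_partialS hΓ s t 1) (fun s t => hasDerivAt_partialT hΓ s t 1)
    (by fun_prop) (by fun_prop) (by fun_prop) (by fun_prop) (hper' 0) (hper' 1) 0 1
  calc π * (R ^ 2 - 1)
      = (∫ s in (0)..(2 * π), Γ s 1 0 * partialS Γ s 1 1) -
          ∫ s in (0)..(2 * π), Γ s 0 0 * partialS Γ s 0 1 := by
        rw [integral_mul_deriv_circle R (by simp [h1]) (by simp [h1])
            (hasDerivAt_partialS hΓ · 1 1),
          integral_mul_deriv_circle 1 (by simp [h0]) (by simp [h0]) (hasDerivAt_partialS hΓ · 0 1)]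
        ring
    _ = _ := stokes.symm
    _ ≤ sweptArea Γ := integral_integral_le_sweptArea hΓ

/-- calibration lower bound: every `C¹` isotopy from the unit
circle to the concentric circle of radius `R ≥ 1` (with the standard
orientations) has swept area at least `π(R² − 1)`. -/
theorem sweptArea_lower_bound_circles (Γ : ℝ → ℝ → EuclideanSpace ℝ (Fin 3))
    (hΓ : ContDiff ℝ 1 (Function.uncurry Γ))
    (hper : ∀ s t, Γ (s + 2 * π) t = Γ s t)
    (R : ℝ) (hR : 1 ≤ R)
    (h0 : ∀ s, Γ s 0 = (WithLp.toLp 2 ![Real.cos s, Real.sin s, 0] : EuclideanSpace ℝ (Fin 3)))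
    (h1 : ∀ s, Γ s 1 = (WithLp.toLp 2 ![R * Real.cos s, R * Real.sin s, 0] :
      EuclideanSpace ℝ (Fin 3))) :
    π * (R ^ 2 - 1) ≤ sweptArea Γ :=
  sweptArea_lower_bound_circles_general Γ hΓ hper R h0 h1
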